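/- arXiv:2510.00734 — 3 statements merged into one kernel-verified Lean document; each statement's English description precedes it below -/
import Mathlib

section
/- Let π₁ and π₂ be probability densities on ℝ^l with π₁ absolutely continuous with respect to π₂, and assume ∫_{ℝ^l} (π₁(z) + π₂(z)) log²π₂(z) dz < ∞, D_KL(π₁,π₂) < ∞, and π₁ log π₁ is integrable. Then |Ent(π₁) - Ent(π₂)| ≤ √2 · sqrt(∫_{ℝ^l} (π₁(z) + π₂(z)) log²π₂(z) dz) · sqrt(D_KL(π₁, π₂)) + D_KL(π₁, π₂). -/
open MeasureTheory Real

/-- Differential entropy of a probability density `ρ` on `ℝ^l`. -/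
noncomputable def diffEntropy {l : ℕ} (ρ : (Fin l → ℝ) → ℝ) : ℝ :=
  - ∫ y, ρ y * Real.log (ρ y)

/-- Kullback–Leibler divergence between probability densities `π₁` and `π₂` on `ℝ^l`. -/
noncomputable def klDiv {l : ℕ} (π₁ π₂ : (Fin l → ℝ) → ℝ) : ℝ :=
  ∫ z, π₁ z * Real.log (π₁ z / π₂ z)

/-! Ent(π₂) - Ent(π₁) = ∫ (π₁ - π₂) log π₂ + D_KL(π₁, π₂), and D_KL ≥ 0. Cauchy–Schwarz with
weight π₁ + π₂ bounds the first term by √(∫ (π₁ - π₂)² / (π₁ + π₂)) · √(∫ (π₁ + π₂) log² π₂), and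
∫ (π₁ - π₂)² / (π₁ + π₂) ≤ 2 D_KL(π₁, π₂) follows by integrating the pointwise inequality
(t - 1)² ≤ 2 (t + 1) (t log t - t + 1) at t = π₁ / π₂ against π₂. That inequality comes from
(√t - 1)² ≤ t log t - t + 1 and (√t + 1)² ≤ 2 (t + 1). -/

open InformationTheory (klFun klFun_apply klFun_nonneg)

theorem sq_sqrt_sub_one_le_klFun {t : ℝ} (ht : 0 ≤ t) : (√t - 1) ^ 2 ≤ klFun t := by
  obtain ⟨s, hs, rfl⟩ : ∃ s, 0 ≤ s ∧ t = s ^ 2 := ⟨√t, sqrt_nonneg t, (sq_sqrt ht).symm⟩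
  have h_gap : klFun (s ^ 2) - (s - 1) ^ 2 = 2 * s * klFun s := by
    rw [klFun_apply, klFun_apply, log_pow]
    push_cast
    ring
  rw [sqrt_sq hs]
  nlinarith [mul_nonneg (mul_nonneg zero_le_two hs) (klFun_nonneg hs)]

theorem sq_sub_one_le_two_mul_add_one_mul_klFun {t : ℝ} (ht : 0 ≤ t) :
    (t - 1) ^ 2 ≤ 2 * (t + 1) * klFun t := by
  have hfactor : (t - 1) ^ 2 = (√t - 1) ^ 2 * (√t + 1) ^ 2 := by
    linear_combination (2 - t - √t ^ 2) * sq_sqrt ht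
  have hmean : (√t + 1) ^ 2 ≤ 2 * (t + 1) := by
    nlinarith [sq_nonneg (√t - 1), sq_sqrt ht]
  calc (t - 1) ^ 2 = (√t - 1) ^ 2 * (√t + 1) ^ 2 := hfactor
    _ ≤ klFun t * (2 * (t + 1)) :=
        mul_le_mul (sq_sqrt_sub_one_le_klFun ht) hmean (sq_nonneg _) (klFun_nonneg ht)
    _ = 2 * (t + 1) * klFun t := by ring

theorem sq_sub_div_add_le_two_mul {p q : ℝ} (hp : 0 ≤ p) (hq : 0 ≤ q) (hpq : q = 0 → p = 0) :
    (p - q) ^ 2 / (p + q) ≤ 2 * (p * log (p / q) - p + q) := by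
  rcases hq.eq_or_lt with hq0 | hq0
  · simp [← hq0, hpq hq0.symm]
  obtain ⟨t, ht, rfl⟩ : ∃ t, 0 ≤ t ∧ p = q * t := ⟨p / q, div_nonneg hp hq0.le, by field_simp⟩
  rw [mul_div_cancel_left₀ _ hq0.ne', div_le_iff₀ (by positivity)]
  calc (q * t - q) ^ 2 = q ^ 2 * (t - 1) ^ 2 := by ring
    _ ≤ q ^ 2 * (2 * (t + 1) * klFun t) :=
        mul_le_mul_of_nonneg_left (sq_sub_one_le_two_mul_add_one_mul_klFun ht) (sq_nonneg q)
    _ = 2 * (q * t * log t - q * t + q) * (q * t + q) := by rw [klFun_apply]; ring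

section

variable {α : Type*} [MeasurableSpace α] {μ : Measure α}

theorem abs_integral_mul_le_sqrt_mul_sqrt {f g : α → ℝ} (hf : MemLp f 2 μ) (hg : MemLp g 2 μ) :
    |∫ a, f a * g a ∂μ| ≤ √(∫ a, f a ^ 2 ∂μ) * √(∫ a, g a ^ 2 ∂μ) := by
  have hholder := integral_mul_norm_le_Lp_mul_Lq (f := f) (g := g) HolderConjugate.two_two
    (by rwa [ENNReal.ofReal_ofNat]) (by rwa [ENNReal.ofReal_ofNat])
  simp only [norm_eq_abs, rpow_two, sq_abs, ← sqrt_eq_rpow] at hholder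
  calc |∫ a, f a * g a ∂μ| ≤ ∫ a, |f a * g a| ∂μ := abs_integral_le_integral_abs
    _ = ∫ a, |f a| * |g a| ∂μ := by simp_rw [abs_mul]
    _ ≤ _ := hholder

theorem abs_integral_mul_le_sqrt_integral_sq_div_mul_sqrt {f g w : α → ℝ} (hw : 0 ≤ᵐ[μ] w)
    (hfw : ∀ᵐ a ∂μ, w a = 0 → f a = 0) (hf : AEStronglyMeasurable f μ)
    (hg : AEStronglyMeasurable g μ) (hw_meas : AEStronglyMeasurable w μ)
    (hf_int : Integrable (fun a => f a ^ 2 / w a) μ)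
    (hg_int : Integrable (fun a => w a * g a ^ 2) μ) :
    |∫ a, f a * g a ∂μ| ≤ √(∫ a, f a ^ 2 / w a ∂μ) * √(∫ a, w a * g a ^ 2 ∂μ) := by
  set u := fun a => f a / √(w a)
  set v := fun a => √(w a) * g a
  have hu_sq : ∀ᵐ a ∂μ, f a ^ 2 / w a = u a ^ 2 := by
    filter_upwards [hw] with a ha
    rw [div_pow, sq_sqrt ha]
  have hv_sq : ∀ᵐ a ∂μ, w a * g a ^ 2 = v a ^ 2 := by
    filter_upwards [hw] with a ha
    rw [mul_pow, sq_sqrt ha]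
  have huv : ∀ᵐ a ∂μ, f a * g a = u a * v a := by
    filter_upwards [hw, hfw] with a ha hfa
    rcases ha.eq_or_lt with ha0 | ha0
    · simp [u, hfa ha0.symm]
    · have : √(w a) ≠ 0 := (sqrt_pos.2 ha0).ne'
      simp only [u, v]
      field_simp
  have hu : MemLp u 2 μ := (memLp_two_iff_integrable_sq
    (hf.aemeasurable.div hw_meas.aemeasurable.sqrt).aestronglyMeasurable).2 (hf_int.congr hu_sq)
  have hv : MemLp v 2 μ := (memLp_two_iff_integrable_sq
    (hw_meas.aemeasurable.sqrt.mul hg.aemeasurable).aestronglyMeasurable).2 (hg_int.congr hv_sq)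
  rw [integral_congr_ae huv, integral_congr_ae hu_sq, integral_congr_ae hv_sq]
  exact abs_integral_mul_le_sqrt_mul_sqrt hu hv

variable {p q : α → ℝ}

theorem integrable_sq_sub_div_add (hp : 0 ≤ᵐ[μ] p) (hq : 0 ≤ᵐ[μ] q) (hp_int : Integrable p μ)
    (hq_int : Integrable q μ) : Integrable (fun a => (p a - q a) ^ 2 / (p a + q a)) μ := by
  refine (hp_int.add hq_int).mono' ?_ ?_
  · exact (((hp_int.aemeasurable.sub hq_int.aemeasurable).pow_const 2).div
      (hp_int.aemeasurable.add hq_int.aemeasurable)).aestronglyMeasurable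
  · filter_upwards [hp, hq] with a (ha : 0 ≤ p a) (hb : 0 ≤ q a)
    rw [norm_of_nonneg (by positivity), Pi.add_apply]
    exact div_le_of_le_mul₀ (by positivity) (by positivity) (by nlinarith)

theorem integral_sq_sub_div_add_le (hp : 0 ≤ᵐ[μ] p) (hq : 0 ≤ᵐ[μ] q)
    (hpq : ∀ᵐ a ∂μ, q a = 0 → p a = 0) (hp_int : Integrable p μ) (hq_int : Integrable q μ)
    (h_mass : ∫ a, p a ∂μ = ∫ a, q a ∂μ) (h_kl : Integrable (fun a => p a * log (p a / q a)) μ) :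
    ∫ a, (p a - q a) ^ 2 / (p a + q a) ∂μ ≤ 2 * ∫ a, p a * log (p a / q a) ∂μ := by
  have h_sub : Integrable (fun a => p a * log (p a / q a) - p a) μ := h_kl.sub hp_int
  calc ∫ a, (p a - q a) ^ 2 / (p a + q a) ∂μ
      ≤ ∫ a, 2 * (p a * log (p a / q a) - p a + q a) ∂μ := by
        refine integral_mono_of_nonneg ?_ ((h_sub.add hq_int).const_mul 2) ?_
        · filter_upwards [hp, hq] with a (ha : 0 ≤ p a) (hb : 0 ≤ q a)
          positivity
        · filter_upwards [hp, hq, hpq] with a ha hb hab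
          exact sq_sub_div_add_le_two_mul ha hb hab
    _ = 2 * ∫ a, p a * log (p a / q a) ∂μ := by
        rw [integral_const_mul, integral_add h_sub hq_int, integral_sub h_kl hp_int,
          h_mass]
        ring

theorem integral_mul_log_div_nonneg (hp : 0 ≤ᵐ[μ] p) (hq : 0 ≤ᵐ[μ] q)
    (hpq : ∀ᵐ a ∂μ, q a = 0 → p a = 0) (hp_int : Integrable p μ) (hq_int : Integrable q μ)
    (h_mass : ∫ a, p a ∂μ = ∫ a, q a ∂μ) (h_kl : Integrable (fun a => p a * log (p a / q a)) μ) :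
    0 ≤ ∫ a, p a * log (p a / q a) ∂μ := by
  have h_chi := integral_sq_sub_div_add_le hp hq hpq hp_int hq_int h_mass h_kl
  have h_chi_nonneg : 0 ≤ ∫ a, (p a - q a) ^ 2 / (p a + q a) ∂μ := by
    refine integral_nonneg_of_ae ?_
    filter_upwards [hp, hq] with a (ha : 0 ≤ p a) (hb : 0 ≤ q a)
    positivity
  linarith

theorem abs_integral_sub_mul_le_sqrt_mul_sqrt {g : α → ℝ} (hp : 0 ≤ᵐ[μ] p) (hq : 0 ≤ᵐ[μ] q)
    (hp_int : Integrable p μ) (hq_int : Integrable q μ) (hg : AEStronglyMeasurable g μ)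
    (h : Integrable (fun a => (p a + q a) * g a ^ 2) μ) :
    |∫ a, (p a - q a) * g a ∂μ|
      ≤ √(∫ a, (p a - q a) ^ 2 / (p a + q a) ∂μ) * √(∫ a, (p a + q a) * g a ^ 2 ∂μ) := by
  refine abs_integral_mul_le_sqrt_integral_sq_div_mul_sqrt (f := fun a => p a - q a)
    (w := fun a => p a + q a) ?_ ?_ (hp_int.1.sub hq_int.1) hg (hp_int.1.add hq_int.1)
    (integrable_sq_sub_div_add hp hq hp_int hq_int) h
  · filter_upwards [hp, hq] with a (ha : 0 ≤ p a) (hb : 0 ≤ q a)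
    exact add_nonneg ha hb
  · filter_upwards [hp, hq] with a (ha : 0 ≤ p a) (hb : 0 ≤ q a) hab
    linarith

theorem integrable_mul_of_integrable_add_mul_sq {g : α → ℝ} (hp : 0 ≤ᵐ[μ] p) (hq : 0 ≤ᵐ[μ] q)
    (hp_int : Integrable p μ) (hg : AEStronglyMeasurable g μ)
    (h : Integrable (fun a => (p a + q a) * g a ^ 2) μ) : Integrable (fun a => p a * g a) μ := by
  refine (hp_int.add h).mono' (hp_int.1.mul hg) ?_
  filter_upwards [hp, hq] with a (ha : 0 ≤ p a) (hb : 0 ≤ q a)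
  rw [norm_mul, norm_of_nonneg ha, norm_eq_abs, Pi.add_apply]
  nlinarith [sq_nonneg (|g a| - 1), sq_abs (g a), mul_nonneg hb (sq_nonneg (g a))]

end

theorem diffEntropy_sub_diffEntropy {l : ℕ} {π₁ π₂ : (Fin l → ℝ) → ℝ}
    (h_ac : ∀ᵐ z, π₂ z = 0 → π₁ z = 0) (h₁₁ : Integrable (fun z => π₁ z * log (π₁ z)))
    (h₁₂ : Integrable (fun z => π₁ z * log (π₂ z)))
    (h₂₂ : Integrable (fun z => π₂ z * log (π₂ z))) :
    diffEntropy π₂ - diffEntropy π₁ = (∫ z, (π₁ z - π₂ z) * log (π₂ z)) + klDiv π₁ π₂ := by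
  have hkl : klDiv π₁ π₂ = (∫ z, π₁ z * log (π₁ z)) - ∫ z, π₁ z * log (π₂ z) := by
    rw [klDiv, ← integral_sub h₁₁ h₁₂]
    refine integral_congr_ae ?_
    filter_upwards [h_ac] with z hz
    by_cases h₁ : π₁ z = 0
    · simp [h₁]
    · rw [log_div h₁ (mt hz h₁)]
      ring
  simp_rw [diffEntropy, hkl, sub_mul]
  rw [integral_sub h₁₂ h₂₂]
  ring

theorem entropy_difference_kl_bound_general {l : ℕ} (π₁ π₂ : (Fin l → ℝ) → ℝ)
    (h₁_nonneg : ∀ z, 0 ≤ π₁ z) (h₂_nonneg : ∀ z, 0 ≤ π₂ z)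
    (h₁_prob : ∫ z, π₁ z = 1) (h₂_prob : ∫ z, π₂ z = 1)
    (h_ac : ∀ᵐ z, π₂ z = 0 → π₁ z = 0)
    (h_log₂ : Integrable (fun z => (π₁ z + π₂ z) * (Real.log (π₂ z)) ^ 2))
    (h_kl : Integrable (fun z => π₁ z * Real.log (π₁ z / π₂ z)))
    (h_int : Integrable (fun z => π₁ z * Real.log (π₁ z))) :
    |diffEntropy π₁ - diffEntropy π₂|
      ≤ Real.sqrt 2 * Real.sqrt (∫ z, (π₁ z + π₂ z) * (Real.log (π₂ z)) ^ 2)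
          * Real.sqrt (klDiv π₁ π₂)
        + klDiv π₁ π₂ := by
  have hμ₁ : Integrable π₁ := integrable_of_integral_eq_one h₁_prob
  have hμ₂ : Integrable π₂ := integrable_of_integral_eq_one h₂_prob
  have hπ₁ : 0 ≤ᵐ[volume] π₁ := ae_of_all _ h₁_nonneg
  have hπ₂ : 0 ≤ᵐ[volume] π₂ := ae_of_all _ h₂_nonneg
  have h_mass : ∫ z, π₁ z = ∫ z, π₂ z := h₁_prob.trans h₂_prob.symm
  have hlog : AEStronglyMeasurable (fun z => log (π₂ z)) :=
    hμ₂.aemeasurable.log.aestronglyMeasurable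
  have h₁₂ := integrable_mul_of_integrable_add_mul_sq hπ₁ hπ₂ hμ₁ hlog h_log₂
  have h₂₂ := integrable_mul_of_integrable_add_mul_sq hπ₂ hπ₁ hμ₂ hlog
    (by simpa only [add_comm] using h_log₂)
  have hchi : ∫ z, (π₁ z - π₂ z) ^ 2 / (π₁ z + π₂ z) ≤ 2 * klDiv π₁ π₂ :=
    integral_sq_sub_div_add_le hπ₁ hπ₂ h_ac hμ₁ hμ₂ h_mass h_kl
  have hkl_nonneg : 0 ≤ klDiv π₁ π₂ :=
    integral_mul_log_div_nonneg hπ₁ hπ₂ h_ac hμ₁ hμ₂ h_mass h_kl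
  have hcs := abs_integral_sub_mul_le_sqrt_mul_sqrt hπ₁ hπ₂ hμ₁ hμ₂ hlog h_log₂
  rw [abs_sub_comm, diffEntropy_sub_diffEntropy h_ac h_int h₁₂ h₂₂]
  calc |(∫ z, (π₁ z - π₂ z) * log (π₂ z)) + klDiv π₁ π₂|
      ≤ |∫ z, (π₁ z - π₂ z) * log (π₂ z)| + klDiv π₁ π₂ :=
        (abs_add_le _ _).trans_eq (by rw [abs_of_nonneg hkl_nonneg])
    _ ≤ √(2 * klDiv π₁ π₂) * √(∫ z, (π₁ z + π₂ z) * log (π₂ z) ^ 2) + klDiv π₁ π₂ := by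
        gcongr
        exact hcs.trans (by gcongr)
    _ = _ := by rw [sqrt_mul zero_le_two]; ring

/-- For probability densities `π₁ ≪ π₂` on `ℝ^l` with
`∫ (π₁+π₂) log²π₂ < ∞`, `D_KL(π₁,π₂) < ∞` and `π₁ log π₁` integrable,
`|Ent(π₁) - Ent(π₂)|
  ≤ √2 · sqrt(∫ (π₁+π₂) log²π₂) · sqrt(D_KL(π₁,π₂)) + D_KL(π₁,π₂)`. -/
theorem entropy_difference_kl_bound {l : ℕ} (π₁ π₂ : (Fin l → ℝ) → ℝ)
    (h₁_meas : Measurable π₁) (h₂_meas : Measurable π₂)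
    (h₁_nonneg : ∀ z, 0 ≤ π₁ z) (h₂_nonneg : ∀ z, 0 ≤ π₂ z)
    (h₁_prob : ∫ z, π₁ z = 1) (h₂_prob : ∫ z, π₂ z = 1)
    (h_ac : ∀ᵐ z, π₂ z = 0 → π₁ z = 0)
    (h_log₂ : Integrable (fun z => (π₁ z + π₂ z) * (Real.log (π₂ z)) ^ 2))
    (h_kl : Integrable (fun z => π₁ z * Real.log (π₁ z / π₂ z)))
    (h_int : Integrable (fun z => π₁ z * Real.log (π₁ z))) :
    |diffEntropy π₁ - diffEntropy π₂|
      ≤ Real.sqrt 2 * Real.sqrt (∫ z, (π₁ z + π₂ z) * (Real.log (π₂ z)) ^ 2)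
          * Real.sqrt (klDiv π₁ π₂)
        + klDiv π₁ π₂ :=
  entropy_difference_kl_bound_general π₁ π₂ h₁_nonneg h₂_nonneg h₁_prob h₂_prob h_ac h_log₂ h_kl
    h_int
end

section
/- Fix p > 1/2. Then the function σ ↦ (1/(2σ²) - 1/2 + log σ)^p / |log σ|, defined for σ > 0 with σ ≠ 1, tends to 0 as σ → 1. (The numerator equals D_KL(N(0,1), N(0,σ²))^p and the denominator equals |Ent(N(0,1)) - Ent(N(0,σ²))|, showing that the Kullback–Leibler divergence raised to any power p > 1/2 is asymptotically negligible compared to the differential entropy difference between the one-dimensional normal distributions N(0,1) and N(0,σ²) as σ → 1.) -/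
/-!
Write `u = log σ`. Then `1 / (2σ²) - 1/2 + log σ = (exp (-2u) - 1 + 2u) / 2`, which lies between
`0` and `2u²` once `|u| ≤ 1/2`, by the second-order Taylor bound for `exp`. Hence the quotient is
at most `2 ^ p * |u| ^ (2p - 1)`, which tends to `0` because `2p - 1 > 0`.
-/

open Real Filter Topology

/-- `D_KL(N(0,1) ‖ N(0,σ²))` in closed form. -/
noncomputable def klGaussianReal (σ : ℝ) : ℝ := 1 / (2 * σ ^ 2) - 1 / 2 + log σ

lemma klGaussianReal_eq {σ : ℝ} (hσ : 0 < σ) :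
    klGaussianReal σ = (exp (-(2 * log σ)) - 1 + 2 * log σ) / 2 := by
  have hσ2 : exp (2 * log σ) = σ ^ 2 := by
    rw [← log_rpow hσ, exp_log (by positivity), rpow_two]
  rw [klGaussianReal, exp_neg, hσ2]
  field_simp

lemma klGaussianReal_nonneg {σ : ℝ} (hσ : 0 < σ) : 0 ≤ klGaussianReal σ := by
  rw [klGaussianReal_eq hσ]
  linarith [add_one_le_exp (-(2 * log σ))]

lemma exp_sub_one_sub_le_sq {x : ℝ} (hx : |x| ≤ 1) : exp x - 1 - x ≤ x ^ 2 :=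
  (le_abs_self _).trans (abs_exp_sub_one_sub_id_le hx)

lemma klGaussianReal_le_two_mul_log_sq {σ : ℝ} (hσ : 0 < σ) (hlog : |log σ| ≤ 1 / 2) :
    klGaussianReal σ ≤ 2 * log σ ^ 2 := by
  have h := exp_sub_one_sub_le_sq (x := -(2 * log σ))
    (by rw [abs_neg, abs_mul, abs_two]; linarith)
  rw [klGaussianReal_eq hσ]
  nlinarith

lemma rpow_div_abs_le_of_le_mul_sq {a u C p : ℝ} (ha : 0 ≤ a) (hC : 0 ≤ C) (hp : 0 ≤ p)
    (h : a ≤ C * u ^ 2) : a ^ p / |u| ≤ C ^ p * |u| ^ (2 * p - 1) := by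
  rcases eq_or_ne u 0 with rfl | hu
  · simp only [abs_zero, div_zero]
    positivity
  have hu' : 0 < |u| := abs_pos.mpr hu
  calc a ^ p / |u| ≤ (C * |u| ^ (2 : ℝ)) ^ p / |u| := by
        rw [rpow_two, sq_abs]
        gcongr
    _ = C ^ p * |u| ^ (2 * p - 1) := by
        rw [mul_rpow hC (by positivity), ← rpow_mul hu'.le, rpow_sub hu', rpow_one, mul_comm 2 p,
          mul_div_assoc]

lemma tendsto_rpow_div_abs_of_le_mul_sq {α : Type*} {l : Filter α} {f g : α → ℝ} {C p : ℝ}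
    (hp : 1 / 2 < p) (hC : 0 ≤ C) (hg : Tendsto g l (𝓝 0))
    (hf : ∀ᶠ x in l, 0 ≤ f x ∧ f x ≤ C * g x ^ 2) :
    Tendsto (fun x => f x ^ p / |g x|) l (𝓝 0) := by
  have hbound : Tendsto (fun x => C ^ p * |g x| ^ (2 * p - 1)) l (𝓝 0) := by
    have h := (hg.abs.rpow_const (Or.inr (by linarith : 0 ≤ 2 * p - 1))).const_mul (C ^ p)
    rwa [abs_zero, zero_rpow (by linarith), mul_zero] at h
  refine squeeze_zero' ?_ ?_ hbound
  · filter_upwards [hf] with x hx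
    exact div_nonneg (rpow_nonneg hx.1 p) (abs_nonneg _)
  · filter_upwards [hf] with x hx
    exact rpow_div_abs_le_of_le_mul_sq hx.1 hC (by linarith) hx.2

/-- For any fixed `p > 1/2`, the function
`σ ↦ (1/(2σ²) - 1/2 + log σ)^p / |log σ|` tends to `0` as `σ → 1` (σ ≠ 1).
The numerator is `D_KL(N(0,1), N(0,σ²))^p` and the denominator is
`|Ent(N(0,1)) - Ent(N(0,σ²))|`. -/
theorem kl_power_negligible_vs_entropy_difference (p : ℝ) (hp : 1 / 2 < p) :
    Filter.Tendsto
      (fun σ : ℝ => (1 / (2 * σ ^ 2) - 1 / 2 + Real.log σ) ^ p / |Real.log σ|)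
      (nhdsWithin 1 {σ : ℝ | σ ≠ 1}) (nhds 0) := by
  have hlog : Tendsto log (𝓝 1) (𝓝 0) := by
    simpa using (continuousAt_log one_ne_zero).tendsto
  have hpos : ∀ᶠ σ in 𝓝 (1 : ℝ), 0 < σ := eventually_gt_nhds one_pos
  have hsmall : ∀ᶠ σ in 𝓝 (1 : ℝ), |log σ| ≤ 1 / 2 := by
    simpa [Real.dist_eq] using hlog.eventually (Metric.closedBall_mem_nhds 0 one_half_pos)
  have hkl : ∀ᶠ σ in 𝓝 (1 : ℝ),
      0 ≤ klGaussianReal σ ∧ klGaussianReal σ ≤ 2 * log σ ^ 2 := by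
    filter_upwards [hpos, hsmall] with σ hσ hσlog
    exact ⟨klGaussianReal_nonneg hσ, klGaussianReal_le_two_mul_log_sq hσ hσlog⟩
  exact (tendsto_rpow_div_abs_of_le_mul_sq hp zero_le_two hlog hkl).mono_left
    nhdsWithin_le_nhds
end

section
/- Let G_K : [0,1]^K → ℝ^d be measurable and bounded with sup_{x ∈ [0,1]^K} ‖G_K(x)‖_Γ ≤ B. Then there exists a finite constant C, depending only on B, d and Γ, such that for every M ∈ ℕ with M > 0 and every choice of points x₁,…,x_M ∈ [0,1]^K, the Gaussian mixture density π_M(y) = (1/M)∑_{m=1}^M (2π)^{-d/2} det(Γ)^{-1/2} exp(-½‖G_K(x_m)-y‖_Γ²) satisfies ∫_{ℝ^d} π_M(y) log²π_M(y) dy ≤ C. In particular the bound is independent of M and of the chosen points, hence holds uniformly over any (random or deterministic) cubature node set in [0,1]^K. -/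
/-!
Every component of `π_M` is centred in the `Γ`-ball of radius `B`, so the parallelogram law for
the form `Γ⁻¹` traps `π_M(y)` between `c e^{-B² - ‖y‖²_Γ}` and `c e^{B² - ‖y‖²_Γ/4}`, with `c` the
Gaussian normalising constant, whatever `M` and the nodes are. Hence `log² π_M(y)` grows at most
like `‖y‖⁴_Γ ≲ e^{‖y‖²_Γ/8}`, and `π_M log² π_M` is dominated by a fixed multiple of
`e^{-‖y‖²_Γ/8}`, which is integrable because `Γ⁻¹` is positive definite.
-/

open MeasureTheory Real Matrix

/-- `‖z‖_Γ² = zᵀ Γ⁻¹ z` for `z ∈ ℝ^d`. -/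
noncomputable def normGammaSq {d : ℕ} (Γ : Matrix (Fin d) (Fin d) ℝ) (z : Fin d → ℝ) : ℝ :=
  z ⬝ᵥ (Γ⁻¹ *ᵥ z)

/-- `‖z‖_Γ = sqrt(zᵀ Γ⁻¹ z)`. -/
noncomputable def normGamma {d : ℕ} (Γ : Matrix (Fin d) (Fin d) ℝ) (z : Fin d → ℝ) : ℝ :=
  Real.sqrt (normGammaSq Γ z)

section QuadraticForm

variable {n : Type*} [Fintype n]

lemma isCompact_setOf_dotProduct_self_eq_one : IsCompact {z : n → ℝ | z ⬝ᵥ z = 1} := by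
  refine Metric.isCompact_of_isClosed_isBounded (isClosed_eq (by fun_prop) continuous_const) ?_
  refine (Metric.isBounded_iff_subset_closedBall 0).2 ⟨1, fun z hz => ?_⟩
  rw [mem_closedBall_zero_iff, pi_norm_le_iff_of_nonneg zero_le_one]
  intro i
  have hzi : z i ^ 2 ≤ z ⬝ᵥ z := by
    simpa [dotProduct, sq] using
      Finset.single_le_sum (fun j _ => mul_self_nonneg (z j)) (Finset.mem_univ i)
  rw [Real.norm_eq_abs, ← sq_le_one_iff_abs_le_one]
  exact hzi.trans_eq hz

namespace Matrix

lemma smul_dotProduct_mulVec_smul (A : Matrix n n ℝ) (t : ℝ) (z : n → ℝ) :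
    (t • z) ⬝ᵥ A *ᵥ (t • z) = t ^ 2 * (z ⬝ᵥ A *ᵥ z) := by
  simp only [mulVec_smul, dotProduct_smul, smul_dotProduct, smul_eq_mul]
  ring

lemma dotProduct_mulVec_parallelogram_law (A : Matrix n n ℝ) (a b : n → ℝ) :
    (a - b) ⬝ᵥ A *ᵥ (a - b) + (a + b) ⬝ᵥ A *ᵥ (a + b) =
      2 * (a ⬝ᵥ A *ᵥ a) + 2 * (b ⬝ᵥ A *ᵥ b) := by
  simp only [mulVec_sub, mulVec_add, sub_dotProduct, add_dotProduct, dotProduct_sub,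
    dotProduct_add]
  ring

lemma PosSemidef.sub_dotProduct_mulVec_sub_le {A : Matrix n n ℝ} (hA : A.PosSemidef)
    (a b : n → ℝ) :
    (a - b) ⬝ᵥ A *ᵥ (a - b) ≤ 2 * (a ⬝ᵥ A *ᵥ a) + 2 * (b ⬝ᵥ A *ᵥ b) := by
  have hsum := hA.dotProduct_mulVec_nonneg (a + b)
  rw [star_trivial] at hsum
  linarith [dotProduct_mulVec_parallelogram_law A a b]

lemma PosDef.exists_pos_mul_dotProduct_self_le {A : Matrix n n ℝ} (hA : A.PosDef) :
    ∃ c > 0, ∀ z : n → ℝ, c * (z ⬝ᵥ z) ≤ z ⬝ᵥ A *ᵥ z := by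
  obtain ⟨c, hc, hcS⟩ := isCompact_setOf_dotProduct_self_eq_one.exists_forall_le'
    (f := fun z : n → ℝ => z ⬝ᵥ A *ᵥ z) (by fun_prop) (a := 0) fun z hz => by
      have hz0 : z ≠ 0 := by rintro rfl; simp at hz
      simpa using hA.dotProduct_mulVec_pos hz0
  refine ⟨c, hc, fun z => ?_⟩
  rcases eq_or_ne z 0 with rfl | hz
  · simp
  have hs : 0 < z ⬝ᵥ z := by simpa using dotProduct_self_star_pos_iff.2 hz
  have hr : (Real.sqrt (z ⬝ᵥ z))⁻¹ ^ 2 = (z ⬝ᵥ z)⁻¹ := by rw [inv_pow, Real.sq_sqrt hs.le]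
  have hunit := hcS ((Real.sqrt (z ⬝ᵥ z))⁻¹ • z) <| by
    simpa [smul_dotProduct, dotProduct_smul, ← mul_assoc, ← sq, hr] using inv_mul_cancel₀ hs.ne'
  rw [smul_dotProduct_mulVec_smul, hr] at hunit
  exact (mul_comm _ _).trans_le ((le_inv_mul_iff₀ hs).1 hunit)

lemma PosDef.integrable_exp_neg_mul_dotProduct_mulVec {A : Matrix n n ℝ} (hA : A.PosDef)
    {a : ℝ} (ha : 0 < a) : Integrable (fun y : n → ℝ => exp (-a * (y ⬝ᵥ A *ᵥ y))) := by
  obtain ⟨c, hc, hcA⟩ := hA.exists_pos_mul_dotProduct_self_le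
  have hprod : Integrable (fun y : n → ℝ => ∏ i, exp (-(a * c) * y i ^ 2)) :=
    Integrable.fintype_prod (f := fun _ x => exp (-(a * c) * x ^ 2))
      fun _ => integrable_exp_neg_mul_sq (by positivity)
  refine hprod.mono' (Continuous.aestronglyMeasurable (by fun_prop)) (ae_of_all _ fun y => ?_)
  rw [Real.norm_of_nonneg (exp_nonneg _), ← exp_sum, exp_le_exp, ← Finset.mul_sum,
    show ∑ i, y i ^ 2 = y ⬝ᵥ y by simp only [dotProduct, sq]]
  nlinarith [hcA y]

end Matrix

end QuadraticForm

lemma sq_le_mul_exp_of_nonneg {t : ℝ} (ht : 0 ≤ t) {ε : ℝ} (hε : 0 < ε) :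
    t ^ 2 ≤ 2 / ε ^ 2 * exp (ε * t) := by
  have hexp := Real.quadratic_le_exp_of_nonneg (mul_nonneg hε.le ht)
  rw [div_mul_eq_mul_div, le_div_iff₀ (by positivity)]
  nlinarith [mul_nonneg hε.le ht]

lemma add_sq_le_mul_exp (L : ℝ) {t : ℝ} (ht : 0 ≤ t) {ε : ℝ} (hε : 0 < ε) :
    (L + t) ^ 2 ≤ (2 * L ^ 2 + 4 / ε ^ 2) * exp (ε * t) := by
  have hexp : 1 ≤ exp (ε * t) := one_le_exp (mul_nonneg hε.le ht)
  have ht2 := sq_le_mul_exp_of_nonneg ht hε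
  have hL : 2 * L ^ 2 ≤ 2 * L ^ 2 * exp (ε * t) := le_mul_of_one_le_right (by positivity) hexp
  have hsplit : 4 / ε ^ 2 * exp (ε * t) = 2 * (2 / ε ^ 2 * exp (ε * t)) := by ring
  nlinarith [sq_nonneg (L - t)]

lemma mul_log_sq_le_of_le_of_le {c u v p : ℝ} (hc : 0 < c) (hv : 0 ≤ v)
    (hlo : c * exp (-(u + v)) ≤ p) (hhi : p ≤ c * exp (u - v / 4)) :
    p * log p ^ 2 ≤ c * exp u * (2 * (|log c| + u) ^ 2 + 256) * exp (-(1 / 8) * v) := by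
  have hp : 0 < p := (mul_pos hc (exp_pos _)).trans_le hlo
  have hlog_lo : log c - (u + v) ≤ log p := by
    simpa [log_mul hc.ne', sub_eq_add_neg] using log_le_log (mul_pos hc (exp_pos _)) hlo
  have hlog_hi : log p ≤ log c + (u - v / 4) := by
    simpa [log_mul hc.ne'] using log_le_log hp hhi
  have hlog_abs : |log p| ≤ |log c| + u + v := by
    rw [abs_le]
    constructor <;> linarith [neg_abs_le (log c), le_abs_self (log c)]
  have hlog_sq : log p ^ 2 ≤ (2 * (|log c| + u) ^ 2 + 256) * exp (v / 8) := by
    calc log p ^ 2 ≤ (|log c| + u + v) ^ 2 := sq_le_sq' (abs_le.1 hlog_abs).1 (abs_le.1 hlog_abs).2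
      _ ≤ (2 * (|log c| + u) ^ 2 + 4 / (1 / 8) ^ 2) * exp (1 / 8 * v) :=
          add_sq_le_mul_exp _ hv (by norm_num)
      _ = (2 * (|log c| + u) ^ 2 + 256) * exp (v / 8) := by ring_nf
  calc p * log p ^ 2 ≤ c * exp (u - v / 4) * ((2 * (|log c| + u) ^ 2 + 256) * exp (v / 8)) :=
        mul_le_mul hhi hlog_sq (sq_nonneg _) (by positivity)
    _ = c * exp u * (2 * (|log c| + u) ^ 2 + 256) * exp (-(1 / 8) * v) := by
        rw [sub_eq_add_neg, exp_add, show -(1 / 8) * v = -(v / 4) + v / 8 by ring, exp_add]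
        ring

lemma one_div_mul_sum_eq_expect {M : ℕ} (f : Fin M → ℝ) :
    1 / (M : ℝ) * ∑ m, f m = Finset.univ.expect f := by
  rw [Fintype.expect_eq_sum_div_card, Fintype.card_fin, one_div_mul_eq_div]

section GaussianMixture

variable {d : ℕ} {Γ : Matrix (Fin d) (Fin d) ℝ}

noncomputable def gaussianDensity (Γ : Matrix (Fin d) (Fin d) ℝ) (μ y : Fin d → ℝ) : ℝ :=
  (Real.sqrt ((2 * π) ^ d * Γ.det))⁻¹ * exp (-(1 / 2) * normGammaSq Γ (μ - y))

noncomputable def gaussianMixtureDensity {M : ℕ} (Γ : Matrix (Fin d) (Fin d) ℝ)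
    (μ : Fin M → Fin d → ℝ) (y : Fin d → ℝ) : ℝ :=
  1 / (M : ℝ) * ∑ m, gaussianDensity Γ (μ m) y

lemma gaussianMixtureDensity_nonneg {M : ℕ} (Γ : Matrix (Fin d) (Fin d) ℝ)
    (μ : Fin M → Fin d → ℝ) (y : Fin d → ℝ) : 0 ≤ gaussianMixtureDensity Γ μ y := by
  unfold gaussianMixtureDensity gaussianDensity
  positivity

lemma normGammaSq_sub_le (hΓ : Γ.PosDef) (a b : Fin d → ℝ) :
    normGammaSq Γ (a - b) ≤ 2 * normGammaSq Γ a + 2 * normGammaSq Γ b :=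
  hΓ.inv.posSemidef.sub_dotProduct_mulVec_sub_le a b

lemma gaussianMixtureDensity_mem_Icc (hΓ : Γ.PosDef) {M : ℕ} (hM : 0 < M)
    {μ : Fin M → Fin d → ℝ} {B : ℝ} (hμ : ∀ m, normGammaSq Γ (μ m) ≤ B ^ 2) (y : Fin d → ℝ) :
    gaussianMixtureDensity Γ μ y ∈ Set.Icc
      ((Real.sqrt ((2 * π) ^ d * Γ.det))⁻¹ * exp (-(B ^ 2 + normGammaSq Γ y)))
      ((Real.sqrt ((2 * π) ^ d * Γ.det))⁻¹ * exp (B ^ 2 - normGammaSq Γ y / 4)) := by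
  have hne : (Finset.univ : Finset (Fin M)).Nonempty := Finset.univ_nonempty_iff.2 ⟨⟨0, hM⟩⟩
  rw [gaussianMixtureDensity, one_div_mul_sum_eq_expect]
  constructor
  · refine Finset.le_expect hne fun m _ => ?_
    have := normGammaSq_sub_le hΓ (μ m) y
    unfold gaussianDensity
    gcongr
    linarith [hμ m]
  · refine Finset.expect_le hne fun m _ => ?_
    -- `‖y‖²_Γ ≤ 2‖μ‖²_Γ + 2‖μ - y‖²_Γ`
    have := normGammaSq_sub_le hΓ (μ m) (μ m - y)
    rw [sub_sub_cancel] at this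
    unfold gaussianDensity
    gcongr
    linarith [hμ m, sq_nonneg B]

lemma exists_gaussianMixtureDensity_mul_log_sq_le (hΓ : Γ.PosDef) (B : ℝ) :
    ∃ C, ∀ M : ℕ, 0 < M → ∀ μ : Fin M → Fin d → ℝ, (∀ m, normGammaSq Γ (μ m) ≤ B ^ 2) →
      ∀ y, gaussianMixtureDensity Γ μ y * log (gaussianMixtureDensity Γ μ y) ^ 2 ≤
        C * exp (-(1 / 8) * normGammaSq Γ y) := by
  set c := (Real.sqrt ((2 * π) ^ d * Γ.det))⁻¹
  have hc : 0 < c := by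
    have := hΓ.det_pos
    positivity
  refine ⟨c * exp (B ^ 2) * (2 * (|log c| + B ^ 2) ^ 2 + 256), fun M hM μ hμ y => ?_⟩
  obtain ⟨hlo, hhi⟩ := gaussianMixtureDensity_mem_Icc hΓ hM hμ y
  exact mul_log_sq_le_of_le_of_le hc (hΓ.inv.posSemidef.dotProduct_mulVec_nonneg y) hlo hhi

end GaussianMixture

theorem gmm_squared_log_moment_uniform_over_nodes_general {d K : ℕ}
    (Γ : Matrix (Fin d) (Fin d) ℝ) (hΓ_pd : Γ.PosDef)
    (GK : (Fin K → ℝ) → (Fin d → ℝ))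
    (B : ℝ)
    (hGK_bdd : ∀ x ∈ Set.Icc (0 : Fin K → ℝ) 1, normGamma Γ (GK x) ≤ B) :
    ∃ C : ℝ, ∀ M : ℕ, 0 < M →
      ∀ nodes : Fin M → (Fin K → ℝ),
        (∀ m, nodes m ∈ Set.Icc (0 : Fin K → ℝ) 1) →
        ∫ y, ((1 / (M : ℝ)) * ∑ m, (Real.sqrt ((2 * Real.pi) ^ d * Γ.det))⁻¹ *
                Real.exp (-(1 / 2) * normGammaSq Γ (GK (nodes m) - y)))
            * (Real.log ((1 / (M : ℝ)) * ∑ m, (Real.sqrt ((2 * Real.pi) ^ d * Γ.det))⁻¹ *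
                Real.exp (-(1 / 2) * normGammaSq Γ (GK (nodes m) - y)))) ^ 2
          ≤ C := by
  obtain ⟨C, hC⟩ := exists_gaussianMixtureDensity_mul_log_sq_le hΓ_pd B
  refine ⟨C * ∫ y, exp (-(1 / 8) * normGammaSq Γ y), fun M hM nodes hnodes => ?_⟩
  have hcentres : ∀ m, normGammaSq Γ (GK (nodes m)) ≤ B ^ 2 :=
    fun m => (Real.sqrt_le_iff.1 (hGK_bdd _ (hnodes m))).2
  change ∫ y, gaussianMixtureDensity Γ (GK ∘ nodes) y *
    log (gaussianMixtureDensity Γ (GK ∘ nodes) y) ^ 2 ≤ _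
  rw [← integral_const_mul]
  exact integral_mono_of_nonneg
    (ae_of_all _ fun y => mul_nonneg (gaussianMixtureDensity_nonneg _ _ y) (sq_nonneg _))
    ((hΓ_pd.inv.integrable_exp_neg_mul_dotProduct_mulVec (by norm_num)).const_mul C)
    (ae_of_all _ fun y => hC M hM _ hcentres y)

/-- Let `G_K : [0,1]^K → ℝ^d` be measurable and bounded with
`‖G_K(x)‖_Γ ≤ B` on `[0,1]^K`. Then there is a finite constant `C` such that for every
`M > 0` and every choice of nodes `x₁, …, x_M ∈ [0,1]^K`, the Gaussian mixture density
`π_M(y) = (1/M)∑ₘ (2π)^{-d/2} det(Γ)^{-1/2} exp(-½‖G_K(xₘ)-y‖_Γ²)` satisfies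
`∫ π_M(y) log²π_M(y) dy ≤ C`; in particular, the bound is uniform over all cubature node
sets in `[0,1]^K`. -/
theorem gmm_squared_log_moment_uniform_over_nodes {d K : ℕ}
    (Γ : Matrix (Fin d) (Fin d) ℝ) (hΓ_symm : Γ.IsSymm) (hΓ_pd : Γ.PosDef)
    (GK : (Fin K → ℝ) → (Fin d → ℝ)) (hGK_meas : Measurable GK)
    (B : ℝ) (hB : 0 < B)
    (hGK_bdd : ∀ x ∈ Set.Icc (0 : Fin K → ℝ) 1, normGamma Γ (GK x) ≤ B) :
    ∃ C : ℝ, ∀ M : ℕ, 0 < M →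
      ∀ nodes : Fin M → (Fin K → ℝ),
        (∀ m, nodes m ∈ Set.Icc (0 : Fin K → ℝ) 1) →
        ∫ y, ((1 / (M : ℝ)) * ∑ m, (Real.sqrt ((2 * Real.pi) ^ d * Γ.det))⁻¹ *
                Real.exp (-(1 / 2) * normGammaSq Γ (GK (nodes m) - y)))
            * (Real.log ((1 / (M : ℝ)) * ∑ m, (Real.sqrt ((2 * Real.pi) ^ d * Γ.det))⁻¹ *
                Real.exp (-(1 / 2) * normGammaSq Γ (GK (nodes m) - y)))) ^ 2
          ≤ C :=
  gmm_squared_log_moment_uniform_over_nodes_general Γ hΓ_pd GK B hGK_bdd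
end
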